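/- arXiv:math/9907102 — 5 statements merged into one kernel-verified Lean document; each statement's English description precedes it below -/
import Mathlib

section
/- Let n ≥ 1 and let m, μ be integers with 0 ≤ μ < m. For j = 2μ, …, 2m let A_j : ℝⁿ → ℂ be a homogeneous polynomial of degree j and set A(ξ,λ) = Σ_{j=2μ}^{2m} λ^{2m−j} A_j(ξ). Then there exists a constant C > 0 with |A(ξ,λ)| ≥ C |ξ|^{2μ} (λ + |ξ|)^{2m−2μ} for all ξ ∈ ℝⁿ and all λ ∈ [0,∞) if and only if the following three conditions hold: (i) A_{2m}(ξ) ≠ 0 for all ξ ∈ ℝⁿ \ {0}; (ii) A_{2μ}(ξ) ≠ 0 for all ξ ∈ ℝⁿ \ {0}; (iii) A(ξ,λ) ≠ 0 for all ξ ∈ ℝⁿ \ {0} and all λ ∈ [0,∞). -/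
/-!
Both sides of the estimate are homogeneous of degree `2m` under `(ξ, λ) ↦ (sξ, sλ)`, `s > 0`,
and `A(tω, λ) = t^{2μ} Ã(ω, t, λ)` with `Ã(ω, t, λ) = Σ_j λ^{2m-j} t^{j-2μ} A_j(ω)`, a polynomial
that stays meaningful at `t = 0`, where `Ã(ω, 0, 1) = A_{2μ}(ω)`. Hence the estimate amounts to a
positive lower bound for `|Ã|` on the compact set `|ω| = 1`, `t + λ = 1`, `t, λ ≥ 0`. By
compactness such a bound exists as soon as `Ã` has no zero there, which is (ii) at `t = 0` and
(iii) at `t > 0`; conversely the estimate passes to the limit `t → 0` and gives (ii). Condition (i)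
is (iii) at `λ = 0`, and the estimate at `ξ = 0` follows from the one at `ξ ≠ 0` by continuity.
-/

open MeasureTheory Finset Polynomial

noncomputable section

/-- `A : ℝⁿ → ℂ` is a (complex-valued) polynomial map, homogeneous of degree `j`
(under positive scaling). -/
def IsHomogPoly (n j : ℕ) (A : EuclideanSpace ℝ (Fin n) → ℂ) : Prop :=
  (∃ p : MvPolynomial (Fin n) ℂ, ∀ ξ, A ξ = MvPolynomial.eval (fun i => (ξ i : ℂ)) p) ∧
    ∀ t : ℝ, 0 < t → ∀ ξ, A (t • ξ) = (t : ℂ) ^ j * A ξ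

/-- The operator pencil `A(ξ,λ) = Σ_{j=2μ}^{2m} λ^{2m−j} A_j(ξ)`. -/
def pencil {n : ℕ} (m μ : ℕ) (A : ℕ → EuclideanSpace ℝ (Fin n) → ℂ)
    (ξ : EuclideanSpace ℝ (Fin n)) (lam : ℝ) : ℂ :=
  ∑ j ∈ Finset.Icc (2 * μ) (2 * m), (lam : ℂ) ^ (2 * m - j) * A j ξ

theorem IsHomogPoly.continuous {n j : ℕ} {B : EuclideanSpace ℝ (Fin n) → ℂ}
    (h : IsHomogPoly n j B) : Continuous B := by
  obtain ⟨⟨p, hp⟩, -⟩ := h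
  rw [funext hp]
  exact (MvPolynomial.continuous_eval p).comp
    (continuous_pi fun i => Complex.continuous_ofReal.comp (EuclideanSpace.proj i).continuous)

section Pencil

open Filter Topology

variable {n m μ : ℕ} {A : ℕ → EuclideanSpace ℝ (Fin n) → ℂ}

def reducedPencil (m μ : ℕ) (A : ℕ → EuclideanSpace ℝ (Fin n) → ℂ)
    (ω : EuclideanSpace ℝ (Fin n)) (r lam : ℝ) : ℂ :=
  ∑ j ∈ Icc (2 * μ) (2 * m), (lam : ℂ) ^ (2 * m - j) * (r : ℂ) ^ (j - 2 * μ) * A j ω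

theorem pencil_zero_right (hμ : μ ≤ m) (ξ : EuclideanSpace ℝ (Fin n)) :
    pencil m μ A ξ 0 = A (2 * m) ξ := by
  rw [pencil, sum_eq_single_of_mem (2 * m) (by simp [hμ])]
  · simp
  · intro j hj hne
    have : 2 * m - j ≠ 0 := by simp only [mem_Icc] at hj; omega
    simp [this]

theorem reducedPencil_zero_one (hμ : μ ≤ m) (ω : EuclideanSpace ℝ (Fin n)) :
    reducedPencil m μ A ω 0 1 = A (2 * μ) ω := by
  rw [reducedPencil, sum_eq_single_of_mem (2 * μ) (by simp [hμ])]
  · simp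
  · intro j hj hne
    have : j - 2 * μ ≠ 0 := by simp only [mem_Icc] at hj; omega
    simp [this]

theorem reducedPencil_mul_mul (ω : EuclideanSpace ℝ (Fin n)) (s r lam : ℝ) :
    reducedPencil m μ A ω (s * r) (s * lam) =
      s ^ (2 * m - 2 * μ) * reducedPencil m μ A ω r lam := by
  rw [reducedPencil, reducedPencil, mul_sum]
  refine sum_congr rfl fun j hj => ?_
  have : 2 * m - 2 * μ = (2 * m - j) + (j - 2 * μ) := by simp only [mem_Icc] at hj; omega
  rw [this]
  push_cast
  ring

theorem pencil_smul (hA : ∀ j ∈ Icc (2 * μ) (2 * m), IsHomogPoly n j (A j)) {r : ℝ} (hr : 0 < r)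
    (ω : EuclideanSpace ℝ (Fin n)) (lam : ℝ) :
    pencil m μ A (r • ω) lam = r ^ (2 * μ) * reducedPencil m μ A ω r lam := by
  rw [pencil, reducedPencil, mul_sum]
  refine sum_congr rfl fun j hj => ?_
  obtain ⟨k, rfl⟩ : ∃ k, j = 2 * μ + k := ⟨j - 2 * μ, by simp only [mem_Icc] at hj; omega⟩
  rw [(hA _ hj).2 r hr, Nat.add_sub_cancel_left, pow_add]
  ring

theorem pencil_eq_mul_reducedPencil (hA : ∀ j ∈ Icc (2 * μ) (2 * m), IsHomogPoly n j (A j))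
    {ξ : EuclideanSpace ℝ (Fin n)} (hξ : ξ ≠ 0) {lam : ℝ} (hlam : 0 ≤ lam) :
    pencil m μ A ξ lam = ((‖ξ‖ ^ (2 * μ) * (lam + ‖ξ‖) ^ (2 * m - 2 * μ) : ℝ) : ℂ) *
      reducedPencil m μ A (‖ξ‖⁻¹ • ξ) (‖ξ‖ / (lam + ‖ξ‖)) (1 - ‖ξ‖ / (lam + ‖ξ‖)) := by
  have hR : 0 < ‖ξ‖ := norm_pos_iff.mpr hξ
  have hs : lam + ‖ξ‖ ≠ 0 := by positivity
  have hrescale : reducedPencil m μ A (‖ξ‖⁻¹ • ξ) ‖ξ‖ lam = ((lam + ‖ξ‖) ^ (2 * m - 2 * μ) : ℝ) *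
      reducedPencil m μ A (‖ξ‖⁻¹ • ξ) (‖ξ‖ / (lam + ‖ξ‖)) (1 - ‖ξ‖ / (lam + ‖ξ‖)) := by
    rw [Complex.ofReal_pow, ← reducedPencil_mul_mul, mul_div_cancel₀ _ hs, mul_sub, mul_one,
      mul_div_cancel₀ _ hs, add_sub_cancel_right]
  conv_lhs => rw [← smul_inv_smul₀ hR.ne' ξ]
  rw [pencil_smul hA hR, hrescale]
  push_cast
  ring

theorem Continuous.reducedPencil (hA : ∀ j ∈ Icc (2 * μ) (2 * m), Continuous (A j))
    {X : Type*} [TopologicalSpace X] {ω : X → EuclideanSpace ℝ (Fin n)} {r lam : X → ℝ}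
    (hω : Continuous ω) (hr : Continuous r) (hlam : Continuous lam) :
    Continuous fun x => _root_.reducedPencil m μ A (ω x) (r x) (lam x) :=
  continuous_finsetSum _ fun j hj => by have := hA j hj; fun_prop

theorem continuous_pencil (hA : ∀ j ∈ Icc (2 * μ) (2 * m), Continuous (A j)) (lam : ℝ) :
    Continuous fun ξ => pencil m μ A ξ lam :=
  continuous_finsetSum _ fun j hj => by have := hA j hj; fun_prop

theorem mul_norm_pow_le_norm_of_pencil_bound (hμ : μ ≤ m)
    (hA : ∀ j ∈ Icc (2 * μ) (2 * m), IsHomogPoly n j (A j)) {C : ℝ} (hC : 0 ≤ C)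
    (hbound : ∀ (ξ : EuclideanSpace ℝ (Fin n)) (lam : ℝ), 0 ≤ lam →
      C * ‖ξ‖ ^ (2 * μ) * (lam + ‖ξ‖) ^ (2 * m - 2 * μ) ≤ ‖pencil m μ A ξ lam‖)
    (ω : EuclideanSpace ℝ (Fin n)) :
    C * ‖ω‖ ^ (2 * μ) ≤ ‖A (2 * μ) ω‖ := by
  have hlim : Tendsto (fun t : ℝ => ‖reducedPencil m μ A ω t 1‖) (𝓝[>] 0)
      (𝓝 ‖A (2 * μ) ω‖) := by
    rw [← reducedPencil_zero_one (A := A) hμ]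
    exact ((Continuous.reducedPencil (fun j hj => (hA j hj).continuous) continuous_const
      continuous_id continuous_const).norm.tendsto 0).mono_left nhdsWithin_le_nhds
  refine ge_of_tendsto hlim ?_
  filter_upwards [self_mem_nhdsWithin] with t (ht : 0 < t)
  have hscaled := hbound (t • ω) 1 zero_le_one
  rw [pencil_smul hA ht, norm_mul, norm_pow, Complex.norm_real, norm_smul,
    Real.norm_of_nonneg ht.le, mul_pow] at hscaled
  have hone : 1 ≤ (1 + t * ‖ω‖) ^ (2 * m - 2 * μ) :=
    one_le_pow₀ (le_add_of_nonneg_right (by positivity))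
  refine le_of_mul_le_mul_left ?_ (pow_pos ht (2 * μ))
  calc t ^ (2 * μ) * (C * ‖ω‖ ^ (2 * μ))
      ≤ t ^ (2 * μ) * (C * ‖ω‖ ^ (2 * μ)) * (1 + t * ‖ω‖) ^ (2 * m - 2 * μ) :=
        le_mul_of_one_le_right (by positivity) hone
    _ = C * (t ^ (2 * μ) * ‖ω‖ ^ (2 * μ)) * (1 + t * ‖ω‖) ^ (2 * m - 2 * μ) := by ring
    _ ≤ _ := hscaled

theorem exists_pos_le_norm_reducedPencil (hμ : μ ≤ m)
    (hA : ∀ j ∈ Icc (2 * μ) (2 * m), IsHomogPoly n j (A j))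
    (hii : ∀ ξ : EuclideanSpace ℝ (Fin n), ξ ≠ 0 → A (2 * μ) ξ ≠ 0)
    (hiii : ∀ ξ : EuclideanSpace ℝ (Fin n), ξ ≠ 0 → ∀ lam : ℝ, 0 ≤ lam → pencil m μ A ξ lam ≠ 0) :
    ∃ C > (0 : ℝ), ∀ ω : EuclideanSpace ℝ (Fin n), ‖ω‖ = 1 → ∀ t ∈ Set.Icc (0 : ℝ) 1,
      C ≤ ‖reducedPencil m μ A ω t (1 - t)‖ := by
  have hcont : Continuous fun p : EuclideanSpace ℝ (Fin n) × ℝ =>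
      ‖reducedPencil m μ A p.1 p.2 (1 - p.2)‖ :=
    (Continuous.reducedPencil (fun j hj => (hA j hj).continuous) continuous_fst continuous_snd
      (continuous_const.sub continuous_snd)).norm
  have hpos : ∀ p ∈ Metric.sphere (0 : EuclideanSpace ℝ (Fin n)) 1 ×ˢ Set.Icc (0 : ℝ) 1,
      0 < ‖reducedPencil m μ A p.1 p.2 (1 - p.2)‖ := by
    rintro ⟨ω, t⟩ ⟨hω, ht0, ht1⟩
    have hω0 : ω ≠ 0 := ne_zero_of_mem_unit_sphere ⟨ω, hω⟩
    rcases ht0.eq_or_lt with rfl | htpos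
    · simpa [reducedPencil_zero_one hμ] using hii ω hω0
    · have hne := hiii (t • ω) (smul_ne_zero htpos.ne' hω0) (1 - t) (sub_nonneg.mpr ht1)
      rw [pencil_smul hA htpos] at hne
      exact norm_pos_iff.mpr (right_ne_zero_of_mul hne)
  obtain ⟨C, hC, hCle⟩ :=
    ((isCompact_sphere 0 1).prod isCompact_Icc).exists_forall_le' hcont.continuousOn hpos
  exact ⟨C, hC, fun ω hω t ht => hCle (ω, t) ⟨by simpa using hω, ht⟩⟩

theorem exists_pencil_bound (hn : 1 ≤ n) (hμ : μ ≤ m)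
    (hA : ∀ j ∈ Icc (2 * μ) (2 * m), IsHomogPoly n j (A j))
    (hii : ∀ ξ : EuclideanSpace ℝ (Fin n), ξ ≠ 0 → A (2 * μ) ξ ≠ 0)
    (hiii : ∀ ξ : EuclideanSpace ℝ (Fin n), ξ ≠ 0 → ∀ lam : ℝ, 0 ≤ lam → pencil m μ A ξ lam ≠ 0) :
    ∃ C > (0 : ℝ), ∀ (ξ : EuclideanSpace ℝ (Fin n)) (lam : ℝ), 0 ≤ lam →
      C * ‖ξ‖ ^ (2 * μ) * (lam + ‖ξ‖) ^ (2 * m - 2 * μ) ≤ ‖pencil m μ A ξ lam‖ := by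
  obtain ⟨C, hC, hCle⟩ := exists_pos_le_norm_reducedPencil hμ hA hii hiii
  have hbound_ne : ∀ ξ : EuclideanSpace ℝ (Fin n), ξ ≠ 0 → ∀ lam : ℝ, 0 ≤ lam →
      C * ‖ξ‖ ^ (2 * μ) * (lam + ‖ξ‖) ^ (2 * m - 2 * μ) ≤ ‖pencil m μ A ξ lam‖ := by
    intro ξ hξ lam hlam
    have hR : 0 < ‖ξ‖ := norm_pos_iff.mpr hξ
    have ht : ‖ξ‖ / (lam + ‖ξ‖) ∈ Set.Icc (0 : ℝ) 1 :=
      ⟨by positivity, div_le_one_of_le₀ (le_add_of_nonneg_left hlam) (by positivity)⟩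
    rw [pencil_eq_mul_reducedPencil hA hξ hlam, norm_mul, Complex.norm_real,
      Real.norm_of_nonneg (by positivity)]
    calc C * ‖ξ‖ ^ (2 * μ) * (lam + ‖ξ‖) ^ (2 * m - 2 * μ)
        = ‖ξ‖ ^ (2 * μ) * (lam + ‖ξ‖) ^ (2 * m - 2 * μ) * C := by ring
      _ ≤ _ := mul_le_mul_of_nonneg_left (hCle _ (norm_smul_inv_norm hξ) _ ht) (by positivity)
  refine ⟨C, hC, fun ξ lam hlam => ?_⟩
  rcases eq_or_ne ξ 0 with rfl | hξ
  · have : Nontrivial (EuclideanSpace ℝ (Fin n)) :=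
      Module.nontrivial_of_finrank_pos (by rw [finrank_euclideanSpace_fin]; omega)
    have hcl : (0 : EuclideanSpace ℝ (Fin n)) ∈ closure {0}ᶜ := by
      rw [(dense_compl_singleton 0).closure_eq]; trivial
    have hlhs : Continuous fun ξ : EuclideanSpace ℝ (Fin n) =>
        C * ‖ξ‖ ^ (2 * μ) * (lam + ‖ξ‖) ^ (2 * m - 2 * μ) := by fun_prop
    exact ContinuousWithinAt.closure_le hcl hlhs.continuousWithinAt
      (continuous_pencil (fun j hj => (hA j hj).continuous) lam).norm.continuousWithinAt
      fun ξ hξ => hbound_ne ξ hξ lam hlam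
  · exact hbound_ne ξ hξ lam hlam

end Pencil

/-- characterization of `N`-ellipticity with parameter in `[0,∞)`. -/
theorem statement0 (n m μ : ℕ) (hn : 1 ≤ n) (hμm : μ < m)
    (A : ℕ → EuclideanSpace ℝ (Fin n) → ℂ)
    (hA : ∀ j ∈ Finset.Icc (2 * μ) (2 * m), IsHomogPoly n j (A j)) :
    (∃ C > (0 : ℝ), ∀ (ξ : EuclideanSpace ℝ (Fin n)) (lam : ℝ), 0 ≤ lam →
        C * ‖ξ‖ ^ (2 * μ) * (lam + ‖ξ‖) ^ (2 * m - 2 * μ) ≤ ‖pencil m μ A ξ lam‖)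
      ↔ ((∀ ξ : EuclideanSpace ℝ (Fin n), ξ ≠ 0 → A (2 * m) ξ ≠ 0) ∧
          (∀ ξ : EuclideanSpace ℝ (Fin n), ξ ≠ 0 → A (2 * μ) ξ ≠ 0) ∧
          (∀ ξ : EuclideanSpace ℝ (Fin n), ξ ≠ 0 → ∀ lam : ℝ, 0 ≤ lam →
            pencil m μ A ξ lam ≠ 0)) := by
  refine ⟨fun ⟨C, hC, hbound⟩ => ?_,
    fun ⟨_, hii, hiii⟩ => exists_pencil_bound hn hμm.le hA hii hiii⟩
  have hiii : ∀ ξ : EuclideanSpace ℝ (Fin n), ξ ≠ 0 → ∀ lam : ℝ, 0 ≤ lam →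
      pencil m μ A ξ lam ≠ 0 := by
    intro ξ hξ lam hlam hzero
    have hR : 0 < ‖ξ‖ := norm_pos_iff.mpr hξ
    have := hbound ξ lam hlam
    rw [hzero, norm_zero] at this
    exact this.not_gt (by positivity)
  refine ⟨fun ξ hξ => ?_, fun ξ hξ => ?_, hiii⟩
  · simpa [pencil_zero_right hμm.le] using hiii ξ hξ 0 le_rfl
  · have hR : 0 < ‖ξ‖ := norm_pos_iff.mpr hξ
    exact norm_pos_iff.mp ((by positivity : 0 < C * ‖ξ‖ ^ (2 * μ)).trans_le
      (mul_norm_pow_le_norm_of_pencil_bound hμm.le hA hC.le hbound ξ))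
end
end

section
/- Let A(ξ,λ) = A_{2m}(ξ) + λ² A_{2m−2}(ξ) + … + λ^{2m−2μ−2} A_{2μ+2}(ξ) + λ^{2m−2μ} A_{2μ}(ξ) contain only even powers of λ (i.e. A_j ≡ 0 for all odd j), and assume A is N-elliptic with parameter in [0,∞). Then Q(τ) := τ^{−2μ} A((0,…,0,τ),1) is a polynomial in τ², and Q has exactly m − μ roots, counted with multiplicity, with positive imaginary part (i.e. A degenerates regularly for λ → ∞). -/
/-! On the line `ξ = τ e_n`, homogeneity turns `A(τ e_n, 1)` into `Σ_j A_j(e_n) τ^j`; as only even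
`j` occur, `Q(τ) = R(τ²)` with `R = Σ_{l=μ}^{m} A_{2l}(e_n) X^{l-μ}`. Ellipticity at `λ = 0` makes the
leading coefficient `A_{2m}(e_n)` nonzero, so `deg Q = 2(m - μ)`, and ellipticity at `λ = 1` gives
`|Q(τ)| ≥ C` on the real axis, so `Q` has no real roots. Since `Q` is even, `z ↦ -z` permutes its
roots and swaps the two half-planes, so exactly half of them have positive imaginary part. -/

open MeasureTheory Finset Polynomial

noncomputable section

/-- `N`-ellipticity with parameter in `[0,∞)`. -/
def NElliptic {n : ℕ} (m μ : ℕ) (A : ℕ → EuclideanSpace ℝ (Fin n) → ℂ) : Prop :=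
  ∃ C > (0 : ℝ), ∀ (ξ : EuclideanSpace ℝ (Fin n)) (lam : ℝ), 0 ≤ lam →
    C * ‖ξ‖ ^ (2 * μ) * (lam + ‖ξ‖) ^ (2 * m - 2 * μ) ≤ ‖pencil m μ A ξ lam‖

/-- The vector `(ξ', t) ∈ ℝ^{k+1}` obtained by appending a last coordinate. -/
def snocVec {k : ℕ} (ξ' : EuclideanSpace ℝ (Fin k)) (t : ℝ) :
    EuclideanSpace ℝ (Fin (k + 1)) :=
  (WithLp.equiv 2 (Fin (k + 1) → ℝ)).symm (Fin.snoc (WithLp.equiv 2 (Fin k → ℝ) ξ') t)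

lemma Multiset.two_mul_card_filter_im_pos {s : Multiset ℂ} (hs : s.map Neg.neg = s)
    (him : ∀ z ∈ s, z.im ≠ 0) :
    2 * Multiset.card (s.filter fun z => 0 < z.im) = Multiset.card s := by
  have hlower : s.filter (fun z => ¬ 0 < z.im) = s.filter fun z => z.im < 0 :=
    Multiset.filter_congr fun z hz => not_lt.trans (him z hz).le_iff_lt
  have hneg : (s.filter fun z => z.im < 0) = (s.filter fun z => 0 < z.im).map Neg.neg := by
    conv_lhs => rw [← hs]
    rw [Multiset.filter_map]
    congr 1
    exact Multiset.filter_congr fun z _ => by simp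
  rw [← congrArg Multiset.card (Multiset.filter_add_not (fun z => 0 < z.im) s), Multiset.card_add,
    hlower, hneg, Multiset.card_map, two_mul]

lemma Polynomial.two_mul_card_roots_filter_im_pos {p : ℂ[X]} (heven : p.comp (-X) = p)
    (hreal : ∀ x : ℝ, p.eval (x : ℂ) ≠ 0) :
    2 * Multiset.card (p.roots.filter fun z => 0 < z.im) = p.natDegree := by
  rw [← IsAlgClosed.card_roots_eq_natDegree]
  refine Multiset.two_mul_card_filter_im_pos ?_ fun z hz hz0 => hreal z.re ?_
  · rw [← roots_comp_neg_X, heven]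
  · rw [show ((z.re : ℝ) : ℂ) = z from Complex.ext rfl (by simp [hz0])]
    exact isRoot_of_mem_roots hz

lemma IsHomogPoly.apply_smul {n j : ℕ} {A : EuclideanSpace ℝ (Fin n) → ℂ}
    (h : IsHomogPoly n j A) (t : ℝ) (ξ : EuclideanSpace ℝ (Fin n)) :
    A (t • ξ) = (t : ℂ) ^ j * A ξ := by
  obtain ⟨⟨p, hp⟩, hhom⟩ := h
  -- On the line `ℝ ξ`, `A` is a polynomial in `t`, equal to `A ξ * t ^ j` for all `t > 0`.
  let q : ℂ[X] := MvPolynomial.aeval (fun i => C (ξ i : ℂ) * X) p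
  have hq : ∀ s : ℝ, q.eval (s : ℂ) = A (s • ξ) := fun s => by
    have hcoord : (fun i => aeval (s : ℂ) (C (ξ i : ℂ) * X)) = fun i => (((s • ξ) i : ℝ) : ℂ) := by
      funext i
      simp only [map_mul, aeval_C, aeval_X, Algebra.algebraMap_self, RingHom.id_apply,
        PiLp.smul_apply, smul_eq_mul, Complex.ofReal_mul, mul_comm]
    rw [hp, ← coe_aeval_eq_eval, MvPolynomial.comp_aeval_apply, hcoord]
    rfl
  have hqeq : q = C (A ξ) * X ^ j := by
    refine eq_of_infinite_eval_eq _ _ ((Set.Ioi_infinite (0 : ℝ)).image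
      Complex.ofReal_injective.injOn |>.mono ?_)
    rintro _ ⟨s, hs, rfl⟩
    simp only [Set.mem_ofPred_eq, hq, hhom s hs, eval_mul, eval_C, eval_pow, eval_X, mul_comm]
  rw [← hq, hqeq, eval_mul, eval_C, eval_pow, eval_X, mul_comm]

lemma snocVec_zero {k : ℕ} (t : ℝ) :
    snocVec (0 : EuclideanSpace ℝ (Fin k)) t = EuclideanSpace.single (Fin.last k) t := by
  ext i
  induction i using Fin.lastCases with
  | last => simp [snocVec]
  | cast j => simp [snocVec, (Fin.castSucc_lt_last j).ne]

lemma Finset.sum_Icc_two_mul_of_odd {M : Type*} [AddCommMonoid M] {f : ℕ → M}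
    (hf : ∀ j, Odd j → f j = 0) (a b : ℕ) :
    ∑ j ∈ Icc (2 * a) (2 * b), f j = ∑ l ∈ Icc a b, f (2 * l) := by
  have hsub : (Icc a b).image (2 * ·) ⊆ Icc (2 * a) (2 * b) := by
    intro j hj
    obtain ⟨l, hl, rfl⟩ := mem_image.1 hj
    simp only [mem_Icc] at hl ⊢
    omega
  rw [← sum_subset hsub, sum_image fun _ _ _ _ h => by omega]
  intro j hj hnot
  rcases Nat.even_or_odd j with ⟨l, rfl⟩ | hodd
  · exact absurd (mem_image.2 ⟨l, by simp only [mem_Icc] at hj ⊢; omega, by omega⟩) hnot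
  · exact hf j hodd

section Pencil

variable {n m μ : ℕ} {A : ℕ → EuclideanSpace ℝ (Fin n) → ℂ}

lemma pencil_zero (hμm : μ ≤ m) (ξ : EuclideanSpace ℝ (Fin n)) :
    pencil m μ A ξ 0 = A (2 * m) ξ := by
  rw [pencil, sum_eq_single_of_mem (2 * m) (mem_Icc.2 ⟨by omega, le_rfl⟩)]
  · simp
  · intro j hj hne
    rw [mem_Icc] at hj
    simp [zero_pow (by omega : 2 * m - j ≠ 0)]

lemma pencil_smul_one (hA : ∀ j ∈ Icc (2 * μ) (2 * m), IsHomogPoly n j (A j)) (t : ℝ)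
    (ξ : EuclideanSpace ℝ (Fin n)) :
    pencil m μ A (t • ξ) 1 = ∑ j ∈ Icc (2 * μ) (2 * m), A j ξ * (t : ℂ) ^ j :=
  sum_congr rfl fun j hj => by rw [(hA j hj).apply_smul]; simp [mul_comm]

lemma NElliptic.principal_ne_zero (h : NElliptic m μ A) (hμm : μ ≤ m)
    {ξ : EuclideanSpace ℝ (Fin n)} (hξ : ξ ≠ 0) : A (2 * m) ξ ≠ 0 := by
  obtain ⟨C, hC, hE⟩ := h
  have hpos : 0 < C * ‖ξ‖ ^ (2 * μ) * (0 + ‖ξ‖) ^ (2 * m - 2 * μ) := by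
    have := norm_pos_iff.2 hξ
    positivity
  rw [← norm_pos_iff, ← pencil_zero (A := A) hμm]
  exact hpos.trans_le (hE ξ 0 le_rfl)

end Pencil

lemma Polynomial.eval_ofReal_ne_zero_of_le {p : ℂ[X]} {C : ℝ} (hC : 0 < C) (i d : ℕ)
    (h : ∀ τ : ℝ, C * |τ| ^ i * (1 + |τ|) ^ d ≤ ‖(τ : ℂ) ^ i * p.eval (τ : ℂ)‖) (τ : ℝ) :
    p.eval (τ : ℂ) ≠ 0 := by
  have hne : ∀ σ : ℝ, σ ≠ 0 → C ≤ ‖p.eval (σ : ℂ)‖ := fun σ hσ => by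
    have hσi : 0 < |σ| ^ i := pow_pos (abs_pos.2 hσ) i
    have hσd : 1 ≤ (1 + |σ|) ^ d := one_le_pow₀ (by linarith [abs_nonneg σ])
    have := h σ
    rw [norm_mul, norm_pow, Complex.norm_real, Real.norm_eq_abs, mul_right_comm, mul_assoc] at this
    calc C ≤ C * (1 + |σ|) ^ d := le_mul_of_one_le_right hC.le hσd
      _ ≤ ‖p.eval (σ : ℂ)‖ := le_of_mul_le_mul_left (by linarith) hσi
  -- The bound extends to `σ = 0` by continuity.
  have hclosed : IsClosed {σ : ℝ | C ≤ ‖p.eval (σ : ℂ)‖} :=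
    isClosed_le continuous_const (by fun_prop)
  have hall : closure ({0}ᶜ : Set ℝ) ⊆ _ := hclosed.closure_subset_iff.2 hne
  rw [closure_compl_singleton] at hall
  exact norm_pos_iff.1 (hC.trans_le (hall (Set.mem_univ τ)))

section EvenSymbol

variable (c : ℕ → ℂ)

-- The polynomial `R` with `Q(τ) = R(τ²)`, where `c j = A_j(e_n)`.
def evenSymbol (μ m : ℕ) : ℂ[X] := ∑ l ∈ Icc μ m, C (c (2 * l)) * X ^ (l - μ)

lemma pow_mul_eval_sq_evenSymbol (μ m : ℕ) (z : ℂ) :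
    z ^ (2 * μ) * (evenSymbol c μ m).eval (z ^ 2) = ∑ l ∈ Icc μ m, c (2 * l) * z ^ (2 * l) := by
  rw [evenSymbol, eval_finsetSum, mul_sum]
  refine sum_congr rfl fun l hl => ?_
  obtain ⟨d, rfl⟩ := Nat.exists_eq_add_of_le (mem_Icc.1 hl).1
  simp only [eval_mul, eval_C, eval_pow, eval_X, Nat.add_sub_cancel_left, ← pow_mul, mul_add,
    pow_add]
  ring

lemma natDegree_evenSymbol {μ m : ℕ} (hμm : μ ≤ m) (hc : c (2 * m) ≠ 0) :
    (evenSymbol c μ m).natDegree = m - μ := by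
  have hcoeff : (evenSymbol c μ m).coeff (m - μ) = c (2 * m) := by
    rw [evenSymbol, finsetSum_coeff, sum_eq_single_of_mem m (mem_Icc.2 ⟨hμm, le_rfl⟩)]
    · simp
    · intro l hl hne
      rw [mem_Icc] at hl
      rw [coeff_C_mul, coeff_X_pow, if_neg (by omega), mul_zero]
  refine le_antisymm (natDegree_sum_le_of_forall_le _ _ fun l hl => ?_)
    (le_natDegree_of_ne_zero (hcoeff ▸ hc))
  rw [mem_Icc] at hl
  exact natDegree_C_mul_X_pow_le _ _ |>.trans (by omega)

end EvenSymbol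

/-- if the pencil contains only even powers of `λ` (i.e. `A_j ≡ 0` for odd `j`)
and is `N`-elliptic with parameter in `[0,∞)`, then `Q(τ) = τ^{-2μ}A((0,…,0,τ),1)` is a
polynomial in `τ²` and has exactly `m − μ` roots (with multiplicity) with positive
imaginary part, i.e. `A` degenerates regularly for `λ → ∞`. -/
theorem statement2 (k m μ : ℕ) (hμm : μ < m)
    (A : ℕ → EuclideanSpace ℝ (Fin (k + 1)) → ℂ)
    (hA : ∀ j ∈ Finset.Icc (2 * μ) (2 * m), IsHomogPoly (k + 1) j (A j))
    (hodd : ∀ j : ℕ, Odd j → ∀ ξ, A j ξ = 0)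
    (hell : NElliptic m μ A) :
    ∃ Q : Polynomial ℂ,
      (∀ τ : ℝ, τ ≠ 0 →
        Polynomial.eval (τ : ℂ) Q
          = ((τ : ℂ) ^ (2 * μ))⁻¹ * pencil m μ A (snocVec (0 : EuclideanSpace ℝ (Fin k)) τ) 1) ∧
      (∃ R : Polynomial ℂ, Q = R.comp (Polynomial.X ^ 2)) ∧
      Multiset.card (Q.roots.filter fun z => 0 < z.im) = m - μ := by
  set e := EuclideanSpace.single (Fin.last k) (1 : ℝ)
  set Q := (evenSymbol (fun j => A j e) μ m).comp (X ^ 2)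
  have hline : ∀ τ : ℝ,
      pencil m μ A (snocVec 0 τ) 1 = (τ : ℂ) ^ (2 * μ) * Q.eval (τ : ℂ) := fun τ => by
    have hτe : snocVec (0 : EuclideanSpace ℝ (Fin k)) τ = τ • e := by
      rw [snocVec_zero]; ext i; simp [e, PiLp.single_apply]
    rw [hτe, pencil_smul_one hA, sum_Icc_two_mul_of_odd (fun j hj => by simp [hodd j hj]),
      eval_comp, eval_pow, eval_X, pow_mul_eval_sq_evenSymbol]
  have hreal : ∀ τ : ℝ, Q.eval (τ : ℂ) ≠ 0 := by
    obtain ⟨C, hC, hE⟩ := hell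
    refine Q.eval_ofReal_ne_zero_of_le hC (2 * μ) (2 * m - 2 * μ) fun τ => ?_
    have := hE (snocVec 0 τ) 1 zero_le_one
    rwa [hline, snocVec_zero, PiLp.norm_single, Real.norm_eq_abs] at this
  have hdeg : Q.natDegree = 2 * (m - μ) := by
    rw [natDegree_comp, natDegree_evenSymbol _ hμm.le (hell.principal_ne_zero hμm.le (by simp [e])),
      natDegree_X_pow, mul_comm]
  have heven : Q.comp (-X) = Q := by rw [comp_assoc, X_pow_comp, neg_sq]
  refine ⟨Q, fun τ hτ => ?_, ⟨_, rfl⟩, ?_⟩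
  · rw [hline, inv_mul_cancel_left₀ (pow_ne_zero _ (Complex.ofReal_ne_zero.2 hτ))]
  · have := Q.two_mul_card_roots_filter_im_pos heven hreal
    omega

end
end

section
/- Let S ≥ 1, let 1 ≤ a_1 < a_2 < … < a_S be real numbers and m_1, …, m_S positive integers. Let l be an integer with 0 ≤ l < 2(m_1 + … + m_S) and define κ ∈ {1,…,S} by 2(m_1 + … + m_{κ−1}) ≤ l < 2(m_1 + … + m_κ) (with the empty sum equal to 0). Then there exists a constant C > 0, depending only on S, l and m_1, …, m_S but not on a_1, …, a_S, such that C^{−1} · a_κ^{2l+1−4(m_1+…+m_κ)} · ∏_{s=κ+1}^S a_s^{−4m_s} ≤ ∫_{−∞}^{∞} t^{2l} ∏_{s=1}^S (t² + a_s²)^{−2m_s} dt ≤ C · a_κ^{2l+1−4(m_1+…+m_κ)} · ∏_{s=κ+1}^S a_s^{−4m_s}. -/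
/-! Write `l = 2(m₁ + … + m_{κ-1}) + j` with `j < 2m_κ`. For the upper bound, estimate
`t² + a_s²` from below by `t²` when `s < κ` and by `a_s²` when `s > κ`; for the lower bound,
estimate it from above by `t² + a_κ²` when `s ≤ κ` and by `(a_s / a_κ)² (t² + a_κ²)` when
`s > κ`. Both sides then reduce to integrals `∫ t^{2k} (t² + a_κ²)^{-n} dt`, which the
substitution `t = a_κ u` turns into `a_κ^{2k+1-2n}` times an integral that does not depend on
`a`; the two integrals obtained this way give the constant `C`. -/

open MeasureTheory Finset

namespace Finset

variable {α M : Type*} [CommMonoid M] [Fintype α] [LinearOrder α]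
  [LocallyFiniteOrderBot α] [LocallyFiniteOrderTop α]

@[to_additive]
lemma prod_Iic_mul_prod_Ioi (f : α → M) (a : α) :
    (∏ x ∈ Iic a, f x) * ∏ x ∈ Ioi a, f x = ∏ x, f x := by
  rw [← prod_union (disjoint_left.2 fun x hx hx' => (mem_Ioi.1 hx').not_ge (mem_Iic.1 hx))]
  congr 1
  ext x
  simp [le_or_gt]

end Finset

lemma pow_div_one_add_sq_pow_le_inv {k n : ℕ} (h : k < n) (u : ℝ) :
    u ^ (2 * k) / (1 + u ^ 2) ^ n ≤ (1 + u ^ 2)⁻¹ := by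
  have h1 : 1 ≤ 1 + u ^ 2 := le_add_of_nonneg_right (sq_nonneg u)
  rw [← one_div, div_le_div_iff₀ (by positivity) (by positivity), one_mul, pow_mul]
  calc (u ^ 2) ^ k * (1 + u ^ 2) ≤ (1 + u ^ 2) ^ k * (1 + u ^ 2) := by gcongr; linarith
    _ = (1 + u ^ 2) ^ (k + 1) := (pow_succ _ _).symm
    _ ≤ (1 + u ^ 2) ^ n := pow_le_pow_right₀ h1 h

lemma integrable_pow_div_one_add_sq_pow {k n : ℕ} (h : k < n) :
    Integrable fun u : ℝ => u ^ (2 * k) / (1 + u ^ 2) ^ n := by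
  refine integrable_inv_one_add_sq.mono' (by fun_prop : Measurable _).aestronglyMeasurable
    (.of_forall fun u => ?_)
  rw [Real.norm_of_nonneg (by rw [pow_mul]; positivity)]
  exact pow_div_one_add_sq_pow_le_inv h u

lemma integral_pow_div_one_add_sq_pow_pos {k n : ℕ} (h : k < n) :
    0 < ∫ u : ℝ, u ^ (2 * k) / (1 + u ^ 2) ^ n :=
  integral_pos_of_integrable_nonneg_nonzero (x := 1)
    ((continuous_pow _).div (by fun_prop) fun u => by positivity)
    (integrable_pow_div_one_add_sq_pow h) (fun u => by rw [pow_mul]; positivity) (by simp)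

lemma pow_div_sq_add_sq_pow_eq (k n : ℕ) {a : ℝ} (ha : a ≠ 0) (t : ℝ) :
    t ^ (2 * k) / (t ^ 2 + a ^ 2) ^ n
      = a ^ (2 * k) / a ^ (2 * n) * ((t / a) ^ (2 * k) / (1 + (t / a) ^ 2) ^ n) := by
  have : t ^ 2 + a ^ 2 = a ^ 2 * (1 + (t / a) ^ 2) := by field_simp; ring
  rw [this, mul_pow, ← pow_mul, div_pow, div_pow]
  field_simp

lemma integrable_pow_div_sq_add_sq_pow {k n : ℕ} (h : k < n) {a : ℝ} (ha : a ≠ 0) :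
    Integrable fun t : ℝ => t ^ (2 * k) / (t ^ 2 + a ^ 2) ^ n := by
  simp_rw [pow_div_sq_add_sq_pow_eq k n ha]
  exact ((integrable_pow_div_one_add_sq_pow h).comp_div ha).const_mul _

lemma integral_pow_div_sq_add_sq_pow (k n : ℕ) {a : ℝ} (ha : 0 < a) :
    ∫ t : ℝ, t ^ (2 * k) / (t ^ 2 + a ^ 2) ^ n
      = a ^ ((2 * k + 1 : ℝ) - 2 * n) * ∫ u : ℝ, u ^ (2 * k) / (1 + u ^ 2) ^ n := by
  simp_rw [pow_div_sq_add_sq_pow_eq k n ha.ne', integral_const_mul,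
    Measure.integral_comp_div (fun u : ℝ => u ^ (2 * k) / (1 + u ^ 2) ^ n), abs_of_pos ha,
    smul_eq_mul, ← mul_assoc]
  congr 1
  rw [Real.rpow_sub ha, Real.rpow_add ha]
  norm_cast
  field_simp

lemma prod_pow_four_mul {ι : Type*} (A : Finset ι) (m : ι → ℕ) (a : ι → ℝ) :
    ∏ s ∈ A, a s ^ (4 * m s) = ∏ s ∈ A, (a s ^ 2) ^ (2 * m s) :=
  prod_congr rfl fun s _ => by rw [← pow_mul, ← mul_assoc]; norm_num

section

variable {S : ℕ} (m : Fin S → ℕ) (κ : Fin S) (a : Fin S → ℝ)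

lemma pow_mul_pow_mul_prod_le_prod (t : ℝ) :
    (t ^ 2) ^ (2 * ∑ s ∈ Iio κ, m s) * (t ^ 2 + a κ ^ 2) ^ (2 * m κ)
        * ∏ s ∈ Ioi κ, a s ^ (4 * m s)
      ≤ ∏ s, (t ^ 2 + a s ^ 2) ^ (2 * m s) := by
  rw [← prod_Iic_mul_prod_Ioi _ κ, ← mul_prod_Iio_eq_prod_Iic, mul_sum, ← prod_pow_eq_pow_sum,
    prod_pow_four_mul, mul_comm ((∏ s ∈ Iio κ, _))]
  gcongr with s _ s _
  · exact le_add_of_nonneg_right (sq_nonneg _)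
  · exact le_add_of_nonneg_left (sq_nonneg _)

lemma prod_mul_pow_le_pow_mul_prod (hmono : Monotone fun s => a s ^ 2) (t : ℝ) :
    (∏ s, (t ^ 2 + a s ^ 2) ^ (2 * m s)) * a κ ^ (4 * ∑ s ∈ Ioi κ, m s)
      ≤ (t ^ 2 + a κ ^ 2) ^ (2 * ∑ s, m s) * ∏ s ∈ Ioi κ, a s ^ (4 * m s) := by
  calc (∏ s, (t ^ 2 + a s ^ 2) ^ (2 * m s)) * a κ ^ (4 * ∑ s ∈ Ioi κ, m s)
      = (∏ s ∈ Iic κ, (t ^ 2 + a s ^ 2) ^ (2 * m s))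
          * ∏ s ∈ Ioi κ, (a κ ^ 2 * (t ^ 2 + a s ^ 2)) ^ (2 * m s) := by
        simp_rw [← prod_Iic_mul_prod_Ioi _ κ, mul_pow, prod_mul_distrib, prod_pow_eq_pow_sum,
          ← pow_mul, ← mul_sum, mul_assoc]
        ring
    _ ≤ (∏ s ∈ Iic κ, (t ^ 2 + a κ ^ 2) ^ (2 * m s))
          * ∏ s ∈ Ioi κ, (a s ^ 2 * (t ^ 2 + a κ ^ 2)) ^ (2 * m s) := by
        gcongr (∏ s ∈ _, ?_ ^ _) * ∏ s ∈ _, ?_ ^ _ with s hs s hs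
        · exact add_le_add_right (hmono (mem_Iic.1 hs)) _
        · have := mul_le_mul_of_nonneg_right (hmono (mem_Ioi.1 hs).le) (sq_nonneg t)
          linarith
    _ = (t ^ 2 + a κ ^ 2) ^ (2 * ∑ s, m s) * ∏ s ∈ Ioi κ, a s ^ (4 * m s) := by
        simp_rw [← sum_Iic_add_sum_Ioi m κ, prod_pow_four_mul, mul_pow, prod_mul_distrib,
          prod_pow_eq_pow_sum, ← mul_sum, mul_add, pow_add]
        ring

end

section

variable {S : ℕ} (m : Fin S → ℕ) (κ : Fin S) {a : Fin S → ℝ} {l : ℕ}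

lemma pow_div_prod_le (ha : ∀ s, 0 < a s) {j : ℕ} (hlj : l = 2 * ∑ s ∈ Iio κ, m s + j) (t : ℝ) :
    t ^ (2 * l) / ∏ s, (t ^ 2 + a s ^ 2) ^ (2 * m s)
      ≤ t ^ (2 * j) / (t ^ 2 + a κ ^ 2) ^ (2 * m κ) / ∏ s ∈ Ioi κ, a s ^ (4 * m s) := by
  have hden (s : Fin S) : 0 < t ^ 2 + a s ^ 2 := by have := ha s; positivity
  rw [div_div, div_le_div_iff₀ (prod_pos fun s _ => pow_pos (hden s) _)
    (mul_pos (pow_pos (hden κ) _) (prod_pos fun s _ => pow_pos (ha s) _))]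
  calc t ^ (2 * l) * ((t ^ 2 + a κ ^ 2) ^ (2 * m κ) * ∏ s ∈ Ioi κ, a s ^ (4 * m s))
      = t ^ (2 * j) * ((t ^ 2) ^ (2 * ∑ s ∈ Iio κ, m s) * (t ^ 2 + a κ ^ 2) ^ (2 * m κ)
          * ∏ s ∈ Ioi κ, a s ^ (4 * m s)) := by
        rw [hlj, mul_add, pow_add, pow_mul t 2]
        ring
    _ ≤ t ^ (2 * j) * ∏ s, (t ^ 2 + a s ^ 2) ^ (2 * m s) := by
        gcongr
        · rw [pow_mul]; positivity
        · exact pow_mul_pow_mul_prod_le_prod m κ a t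

lemma integrable_pow_div_prod (ha : ∀ s, 0 < a s) {j : ℕ} (hlj : l = 2 * ∑ s ∈ Iio κ, m s + j)
    (hj : j < 2 * m κ) :
    Integrable fun t : ℝ => t ^ (2 * l) / ∏ s, (t ^ 2 + a s ^ 2) ^ (2 * m s) := by
  refine ((integrable_pow_div_sq_add_sq_pow hj (ha κ).ne').div_const
    (∏ s ∈ Ioi κ, a s ^ (4 * m s))).mono'
    (by fun_prop : Measurable _).aestronglyMeasurable (.of_forall fun t => ?_)
  rw [Real.norm_of_nonneg (div_nonneg (by rw [pow_mul]; positivity)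
    (prod_nonneg fun s _ => by positivity))]
  exact pow_div_prod_le m κ ha hlj t

lemma integral_pow_div_prod_le (ha : ∀ s, 0 < a s) {j : ℕ}
    (hlj : l = 2 * ∑ s ∈ Iio κ, m s + j) (hj : j < 2 * m κ) :
    ∫ t : ℝ, t ^ (2 * l) / ∏ s, (t ^ 2 + a s ^ 2) ^ (2 * m s)
      ≤ (∫ u : ℝ, u ^ (2 * j) / (1 + u ^ 2) ^ (2 * m κ))
        * (a κ ^ ((2 * l + 1 : ℝ) - 4 * ∑ s ∈ Iic κ, (m s : ℝ))
          / ∏ s ∈ Ioi κ, a s ^ (4 * m s)) := by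
  have hexp : (2 * j + 1 : ℝ) - 2 * (2 * m κ : ℕ)
      = (2 * l + 1 : ℝ) - 4 * ∑ s ∈ Iic κ, (m s : ℝ) := by
    rw [← add_sum_Iio_eq_sum_Iic, hlj]
    push_cast
    ring
  calc ∫ t : ℝ, t ^ (2 * l) / ∏ s, (t ^ 2 + a s ^ 2) ^ (2 * m s)
      ≤ ∫ t : ℝ, t ^ (2 * j) / (t ^ 2 + a κ ^ 2) ^ (2 * m κ) / ∏ s ∈ Ioi κ, a s ^ (4 * m s) :=
        integral_mono (integrable_pow_div_prod m κ ha hlj hj)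
          ((integrable_pow_div_sq_add_sq_pow hj (ha κ).ne').div_const _)
          (pow_div_prod_le m κ ha hlj)
    _ = _ := by
        rw [integral_div, integral_pow_div_sq_add_sq_pow _ _ (ha κ), hexp]
        ring

lemma div_le_pow_div_prod (ha : ∀ s, 0 < a s) (hmono : Monotone a) (t : ℝ) :
    a κ ^ (4 * ∑ s ∈ Ioi κ, m s) * (t ^ (2 * l) / (t ^ 2 + a κ ^ 2) ^ (2 * ∑ s, m s))
        / ∏ s ∈ Ioi κ, a s ^ (4 * m s)
      ≤ t ^ (2 * l) / ∏ s, (t ^ 2 + a s ^ 2) ^ (2 * m s) := by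
  have hsq : Monotone fun s => a s ^ 2 := fun s s' h =>
    pow_le_pow_left₀ (ha s).le (hmono h) 2
  have hden (s : Fin S) : 0 < t ^ 2 + a s ^ 2 := by have := ha s; positivity
  rw [mul_div_assoc', div_div, div_le_div_iff₀ (mul_pos (pow_pos (hden κ) _)
    (prod_pos fun s _ => pow_pos (ha s) _)) (prod_pos fun s _ => pow_pos (hden s) _)]
  calc a κ ^ (4 * ∑ s ∈ Ioi κ, m s) * t ^ (2 * l) * ∏ s, (t ^ 2 + a s ^ 2) ^ (2 * m s)
      = t ^ (2 * l) * ((∏ s, (t ^ 2 + a s ^ 2) ^ (2 * m s)) * a κ ^ (4 * ∑ s ∈ Ioi κ, m s)) := by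
        ring
    _ ≤ t ^ (2 * l) * ((t ^ 2 + a κ ^ 2) ^ (2 * ∑ s, m s) * ∏ s ∈ Ioi κ, a s ^ (4 * m s)) :=
        mul_le_mul_of_nonneg_left (prod_mul_pow_le_pow_mul_prod m κ a hsq t)
          (by rw [pow_mul]; positivity)

lemma le_integral_pow_div_prod (ha : ∀ s, 0 < a s) (hmono : Monotone a)
    (hl : l < 2 * ∑ s, m s)
    (hf : Integrable fun t : ℝ => t ^ (2 * l) / ∏ s, (t ^ 2 + a s ^ 2) ^ (2 * m s)) :
    (∫ u : ℝ, u ^ (2 * l) / (1 + u ^ 2) ^ (2 * ∑ s, m s))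
        * (a κ ^ ((2 * l + 1 : ℝ) - 4 * ∑ s ∈ Iic κ, (m s : ℝ)) / ∏ s ∈ Ioi κ, a s ^ (4 * m s))
      ≤ ∫ t : ℝ, t ^ (2 * l) / ∏ s, (t ^ 2 + a s ^ 2) ^ (2 * m s) := by
  have hexp : ((4 * ∑ s ∈ Ioi κ, m s : ℕ) : ℝ) + ((2 * l + 1 : ℝ) - 2 * (2 * ∑ s, m s : ℕ))
      = (2 * l + 1 : ℝ) - 4 * ∑ s ∈ Iic κ, (m s : ℝ) := by
    rw [← sum_Iic_add_sum_Ioi m κ]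
    push_cast
    ring
  calc _ = ∫ t : ℝ, a κ ^ (4 * ∑ s ∈ Ioi κ, m s)
          * (t ^ (2 * l) / (t ^ 2 + a κ ^ 2) ^ (2 * ∑ s, m s)) / ∏ s ∈ Ioi κ, a s ^ (4 * m s) := by
        rw [integral_div, integral_const_mul, integral_pow_div_sq_add_sq_pow _ _ (ha κ),
          ← Real.rpow_natCast, ← mul_assoc, ← Real.rpow_add (ha κ), hexp]
        ring
    _ ≤ _ := integral_mono
        (((integrable_pow_div_sq_add_sq_pow hl (ha κ).ne').const_mul _).div_const _) hf
        (div_le_pow_div_prod m κ ha hmono)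

end

theorem statement6_general (S : ℕ) (hS : 0 < S) (m : Fin S → ℕ)
    (l : ℕ) (hl : l < 2 * ∑ s, m s) (κ : Fin S)
    (hκ1 : 2 * ∑ s ∈ Finset.Iio κ, m s ≤ l)
    (hκ2 : l < 2 * ∑ s ∈ Finset.Iic κ, m s) :
    ∃ C > (0 : ℝ), ∀ a : Fin S → ℝ, StrictMono a → 1 ≤ a ⟨0, hS⟩ →
      C⁻¹ * (a κ ^ ((2 * l + 1 : ℝ) - 4 * ∑ s ∈ Finset.Iic κ, (m s : ℝ))
            / ∏ s ∈ Finset.Ioi κ, a s ^ (4 * m s))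
          ≤ (∫ t : ℝ, t ^ (2 * l) / ∏ s, (t ^ 2 + a s ^ 2) ^ (2 * m s)) ∧
      (∫ t : ℝ, t ^ (2 * l) / ∏ s, (t ^ 2 + a s ^ 2) ^ (2 * m s))
          ≤ C * (a κ ^ ((2 * l + 1 : ℝ) - 4 * ∑ s ∈ Finset.Iic κ, (m s : ℝ))
            / ∏ s ∈ Finset.Ioi κ, a s ^ (4 * m s)) := by
  obtain ⟨j, hj⟩ := Nat.exists_eq_add_of_le hκ1
  have hjκ : j < 2 * m κ := by
    rw [← add_sum_Iio_eq_sum_Iic] at hκ2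
    omega
  have hJ₁ := integral_pow_div_one_add_sq_pow_pos hjκ
  have hJ₀ := integral_pow_div_one_add_sq_pow_pos hl
  refine ⟨max _ (∫ u : ℝ, u ^ (2 * l) / (1 + u ^ 2) ^ (2 * ∑ s, m s))⁻¹,
    lt_max_of_lt_left hJ₁, fun a hmono ha₀ => ?_⟩
  have ha (s : Fin S) : 0 < a s := one_pos.trans_le (ha₀.trans (hmono.monotone (Nat.zero_le _)))
  have hscale : 0 ≤ a κ ^ ((2 * l + 1 : ℝ) - 4 * ∑ s ∈ Iic κ, (m s : ℝ))
      / ∏ s ∈ Ioi κ, a s ^ (4 * m s) :=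
    div_nonneg (Real.rpow_pos_of_pos (ha κ) _).le (prod_nonneg fun s _ => (pow_pos (ha s) _).le)
  constructor
  · refine le_trans (mul_le_mul_of_nonneg_right ?_ hscale)
      (le_integral_pow_div_prod m κ ha hmono.monotone hl (integrable_pow_div_prod m κ ha hj hjκ))
    exact inv_le_of_inv_le₀ hJ₀ (le_max_right _ _)
  · exact (integral_pow_div_prod_le m κ ha hj hjκ).trans
      (mul_le_mul_of_nonneg_right (le_max_left _ _) hscale)

/-- two-sided estimate for `∫ t^{2l} ∏_s (t² + a_s²)^{-2m_s} dt`
with a constant depending only on `S`, `l` and `m₁,…,m_S` (not on `a₁,…,a_S`),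
assuming `1 ≤ a₁ < … < a_S`. -/
theorem statement6 (S : ℕ) (hS : 0 < S) (m : Fin S → ℕ) (hm : ∀ s, 0 < m s)
    (l : ℕ) (hl : l < 2 * ∑ s, m s) (κ : Fin S)
    (hκ1 : 2 * ∑ s ∈ Finset.Iio κ, m s ≤ l)
    (hκ2 : l < 2 * ∑ s ∈ Finset.Iic κ, m s) :
    ∃ C > (0 : ℝ), ∀ a : Fin S → ℝ, StrictMono a → 1 ≤ a ⟨0, hS⟩ →
      C⁻¹ * (a κ ^ ((2 * l + 1 : ℝ) - 4 * ∑ s ∈ Finset.Iic κ, (m s : ℝ))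
            / ∏ s ∈ Finset.Ioi κ, a s ^ (4 * m s))
          ≤ (∫ t : ℝ, t ^ (2 * l) / ∏ s, (t ^ 2 + a s ^ 2) ^ (2 * m s)) ∧
      (∫ t : ℝ, t ^ (2 * l) / ∏ s, (t ^ 2 + a s ^ 2) ^ (2 * m s))
          ≤ C * (a κ ^ ((2 * l + 1 : ℝ) - 4 * ∑ s ∈ Finset.Iic κ, (m s : ℝ))
            / ∏ s ∈ Finset.Ioi κ, a s ^ (4 * m s)) :=
  statement6_general S hS m l hl κ hκ1 hκ2
end

section
/- Let S ≥ 1 and let (a_1,b_1), …, (a_{S+1},b_{S+1}) be points with nonnegative integer coordinates such that 0 = a_1 < a_2 < … < a_{S+1}, b_1 > b_2 > … > b_{S+1} = 0, each difference a_{s+1} − a_s is even, and the numbers r_s := (a_{s+1} − a_s)/(b_s − b_{s+1}) satisfy r_1 > r_2 > … > r_S > 0. Let N ⊂ ℝ² be the convex hull of the point (0,0) together with the points (a_s,b_s), s = 1, …, S+1. Then there exist constants C₁, C₂ > 0 such that for all ξ ∈ ℝⁿ and all λ ∈ ℂ with |λ| ≥ 1: C₁ ∏_{s=1}^S (|ξ|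 + |λ|^{1/r_s})^{a_{s+1}−a_s} ≤ Σ_{(i,k) ∈ N ∩ ℤ²} |ξ|^i |λ|^k ≤ C₂ ∏_{s=1}^S (|ξ| + |λ|^{1/r_s})^{a_{s+1}−a_s}. -/
/-!
Write `d_s = a_{s+1} - a_s` and `y_s = |λ|^{1/r_s}`, so that `y_s^{d_s} = |λ|^{b_s - b_{s+1}}`.
Choosing, for some cut `m`, the factor `|ξ|` in the first `m` brackets of
`P = ∏_s (|ξ| + y_s)^{d_s}` and `y_s` in the others, the exponents telescope and give the
vertex monomial `|ξ|^{a_m} |λ|^{b_m}`. Each vertex monomial is therefore at most `P`, and so is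
every lattice monomial of `N`, since `(i, k) ↦ |ξ|^i |λ|^k` is log-linear, hence convex, on `ℝ²`.
Conversely, as `r` decreases the `y_s` increase, so `y_s ≤ |ξ|` exactly for `s` below some
cut `m`; bounding each bracket by twice its larger term gives `P ≤ 2^{a_{S+1}} |ξ|^{a_m} |λ|^{b_m}`.
-/

open MeasureTheory Finset

open scoped Classical

noncomputable section

namespace Fin

variable {M : Type*} [AddCommGroup M] {n : ℕ}

theorem sum_filter_castSucc_lt_sub (f : Fin (n + 1) → M) (m : Fin (n + 1)) :
    ∑ s : Fin n with s.castSucc < m, (f s.succ - f s.castSucc) = f m - f 0 := by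
  induction m using Fin.cases with
  | zero => simp
  | succ k =>
    rw [← Fin.sum_Iic_sub]
    congr 1
    ext s
    simp [Fin.castSucc_lt_succ_iff]

theorem sum_filter_not_castSucc_lt_sub (f : Fin (n + 1) → M) (m : Fin (n + 1)) :
    ∑ s : Fin n with ¬s.castSucc < m, (f s.castSucc - f s.succ) = f m - f (last n) := by
  have htotal := sum_filter_castSucc_lt_sub f (last n)
  simp only [castSucc_lt_last, filter_true] at htotal
  rw [← sum_filter_add_sum_filter_not univ (fun s : Fin n => s.castSucc < m),
    sum_filter_castSucc_lt_sub] at htotal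
  have hrest : ∑ s : Fin n with ¬s.castSucc < m, (f s.succ - f s.castSucc)
      = f (last n) - f m := by
    rw [← add_right_inj (f m - f 0), htotal]
    abel
  rw [← neg_sub (f (last n)), ← hrest, ← sum_neg_distrib]
  simp only [neg_sub]

theorem exists_castSucc_lt_iff_of_antitone {p : Fin n → Prop} (hp : Antitone p) :
    ∃ m : Fin (n + 1), ∀ s, p s ↔ s.castSucc < m := by
  rcases (isLowerSet_setOfPred.mpr hp).eq_univ_or_Iio with h | ⟨k, h⟩
  · exact ⟨last n, fun s => iff_of_true (Set.eq_univ_iff_forall.mp h s) (castSucc_lt_last s)⟩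
  · exact ⟨k.castSucc, fun s => by simpa using Set.ext_iff.mp h s⟩

end Fin

theorem convexOn_rpow_mul_rpow {x μ : ℝ} (hx : 0 < x) (hμ : 0 < μ) :
    ConvexOn ℝ Set.univ (fun q : ℝ × ℝ => x ^ q.1 * μ ^ q.2) := by
  let ℓ : ℝ × ℝ →ₗ[ℝ] ℝ := Real.log x • LinearMap.fst ℝ ℝ ℝ + Real.log μ • LinearMap.snd ℝ ℝ ℝ
  have hexp : (fun q : ℝ × ℝ => x ^ q.1 * μ ^ q.2) = Real.exp ∘ ℓ := by
    ext q
    simp [ℓ, Real.rpow_def_of_pos hx, Real.rpow_def_of_pos hμ, ← Real.exp_add, mul_comm]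
  rw [hexp]
  exact convexOn_exp.comp_linearMap ℓ

section NewtonPolygon

variable {S : ℕ} {a b : Fin (S + 1) → ℕ} {r : Fin S → ℝ} {x μ : ℝ}

theorem prod_ite_pow_eq_vertex (ha : Monotone a) (ha0 : a 0 = 0) (hbS : b (Fin.last S) = 0)
    (hr : ∀ s, r s * ((b s.castSucc : ℝ) - b s.succ) = (a s.succ : ℝ) - a s.castSucc)
    (hr0 : ∀ s, r s ≠ 0) (hμ : 0 < μ) (m : Fin (S + 1)) :
    ∏ s, (if s.castSucc < m then x else μ ^ (1 / r s)) ^ (a s.succ - a s.castSucc)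
      = x ^ a m * μ ^ b m := by
  have hxpow : ∑ s : Fin S with s.castSucc < m, (a s.succ - a s.castSucc) = a m := by
    have h := Fin.sum_filter_castSucc_lt_sub (fun i => (a i : ℤ)) m
    rw [ha0, Nat.cast_zero, sub_zero] at h
    exact_mod_cast (Nat.cast_sum _ _).trans <| (sum_congr rfl fun s _ => Nat.cast_sub
      (ha (Fin.castSucc_le_succ s))).trans h
  have hμpow : ∀ s, (μ ^ (1 / r s)) ^ (a s.succ - a s.castSucc)
      = μ ^ ((b s.castSucc : ℝ) - b s.succ) := by
    intro s
    rw [← Real.rpow_natCast, ← Real.rpow_mul hμ.le, Nat.cast_sub (ha (Fin.castSucc_le_succ s)),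
      ← hr s, one_div, inv_mul_cancel_left₀ (hr0 s)]
  simp_rw [ite_pow, prod_ite, prod_pow_eq_pow_sum, hxpow, hμpow,
    ← Real.rpow_sum_of_pos hμ, Fin.sum_filter_not_castSucc_lt_sub (fun i => (b i : ℝ)), hbS,
    Nat.cast_zero, sub_zero, Real.rpow_natCast]

theorem vertex_le_prod (ha : Monotone a) (ha0 : a 0 = 0) (hbS : b (Fin.last S) = 0)
    (hr : ∀ s, r s * ((b s.castSucc : ℝ) - b s.succ) = (a s.succ : ℝ) - a s.castSucc)
    (hr0 : ∀ s, r s ≠ 0) (hx : 0 ≤ x) (hμ : 0 < μ) (m : Fin (S + 1)) :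
    x ^ a m * μ ^ b m ≤ ∏ s, (x + μ ^ (1 / r s)) ^ (a s.succ - a s.castSucc) := by
  rw [← prod_ite_pow_eq_vertex ha ha0 hbS hr hr0 hμ m]
  have hy : ∀ s, 0 ≤ μ ^ (1 / r s) := fun s => Real.rpow_nonneg hμ.le _
  gcongr with s
  split_ifs
  exacts [le_add_of_nonneg_right (hy s), le_add_of_nonneg_left hx]

theorem exists_prod_le_two_pow_mul_vertex (ha : Monotone a) (ha0 : a 0 = 0)
    (hbS : b (Fin.last S) = 0)
    (hr : ∀ s, r s * ((b s.castSucc : ℝ) - b s.succ) = (a s.succ : ℝ) - a s.castSucc)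
    (hrpos : ∀ s, 0 < r s) (hranti : Antitone r) (hx : 0 ≤ x) (hμ : 1 ≤ μ) :
    ∃ m : Fin (S + 1), ∏ s, (x + μ ^ (1 / r s)) ^ (a s.succ - a s.castSucc)
      ≤ 2 ^ (∑ s : Fin S, (a s.succ - a s.castSucc)) * (x ^ a m * μ ^ b m) := by
  have hy_mono : Monotone fun s => μ ^ (1 / r s) := fun s t hst =>
    Real.rpow_le_rpow_of_exponent_le hμ (one_div_le_one_div_of_le (hrpos t) (hranti hst))
  obtain ⟨m, hm⟩ := Fin.exists_castSucc_lt_iff_of_antitone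
    (p := fun s => μ ^ (1 / r s) ≤ x) fun s t hst hyt => (hy_mono hst).trans hyt
  refine ⟨m, ?_⟩
  rw [← prod_ite_pow_eq_vertex ha ha0 hbS hr (fun s => (hrpos s).ne') (by positivity) m,
    ← prod_pow_eq_pow_sum, ← prod_mul_distrib]
  gcongr with s
  rw [← mul_pow]
  gcongr
  split_ifs with h
  · linarith [(hm s).mpr h]
  · linarith [lt_of_not_ge (mt (hm s).mp h)]

theorem pow_mul_pow_le_prod_of_mem_convexHull (ha : Monotone a) (ha0 : a 0 = 0)
    (hbS : b (Fin.last S) = 0)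
    (hr : ∀ s, r s * ((b s.castSucc : ℝ) - b s.succ) = (a s.succ : ℝ) - a s.castSucc)
    (hr0 : ∀ s, r s ≠ 0) (hx : 0 ≤ x) (hμ : 1 ≤ μ) {p : ℕ × ℕ} (hk : p.2 ≤ b 0)
    (hp : ((p.1 : ℝ), (p.2 : ℝ)) ∈ convexHull ℝ (insert ((0 : ℝ), (0 : ℝ))
      (Set.range fun i : Fin (S + 1) => ((a i : ℝ), (b i : ℝ))))) :
    x ^ p.1 * μ ^ p.2 ≤ ∏ s, (x + μ ^ (1 / r s)) ^ (a s.succ - a s.castSucc) := by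
  have hμ0 : 0 < μ := by positivity
  have hvertex := vertex_le_prod ha ha0 hbS hr hr0 hx hμ0
  have hvertex0 := hvertex 0
  rw [ha0, pow_zero, one_mul] at hvertex0
  rcases hx.eq_or_lt with rfl | hx
  -- at `x = 0` convexity is unavailable, but only the monomials with `p.1 = 0` survive
  · rcases Nat.eq_zero_or_pos p.1 with hi | hi
    · rw [hi, pow_zero, one_mul]
      exact (pow_le_pow_right₀ hμ hk).trans hvertex0
    · rw [zero_pow hi.ne', zero_mul]
      exact (by positivity : (0 : ℝ) ≤ μ ^ b 0).trans hvertex0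
  · obtain ⟨q, hq, hpq⟩ := (convexOn_rpow_mul_rpow hx hμ0).exists_ge_of_mem_convexHull
      (Set.subset_univ _) hp
    simp only [Real.rpow_natCast] at hpq
    refine hpq.trans ?_
    rcases hq with rfl | ⟨m, rfl⟩
    · simpa using (one_le_pow₀ hμ).trans hvertex0
    · simpa only [Real.rpow_natCast] using hvertex m

end NewtonPolygon

theorem statement12_general (n S : ℕ)
    (a b : Fin (S + 1) → ℕ) (ha0 : a 0 = 0) (hbS : b (Fin.last S) = 0)
    (hamono : StrictMono a) (hbanti : StrictAnti b)
    (r : Fin S → ℝ)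
    (hrdef : ∀ i : Fin S,
      r i * ((b i.castSucc : ℝ) - (b i.succ : ℝ)) = (a i.succ : ℝ) - (a i.castSucc : ℝ))
    (hrpos : ∀ i, 0 < r i) (hranti : StrictAnti r) :
    ∃ C₁ > (0 : ℝ), ∃ C₂ > (0 : ℝ), ∀ ξ : EuclideanSpace ℝ (Fin n), ∀ lam : ℂ,
      1 ≤ ‖lam‖ →
      C₁ * ∏ i : Fin S, (‖ξ‖ + ‖lam‖ ^ (1 / r i)) ^ (a i.succ - a i.castSucc)
          ≤ (∑ p ∈ (Finset.Iic (a (Fin.last S)) ×ˢ Finset.Iic (b 0)).filter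
                (fun p : ℕ × ℕ => ((p.1 : ℝ), (p.2 : ℝ)) ∈
                  convexHull ℝ (insert ((0 : ℝ), (0 : ℝ))
                    (Set.range fun i : Fin (S + 1) => ((a i : ℝ), (b i : ℝ))))),
              ‖ξ‖ ^ p.1 * ‖lam‖ ^ p.2) ∧
      (∑ p ∈ (Finset.Iic (a (Fin.last S)) ×ˢ Finset.Iic (b 0)).filter
                (fun p : ℕ × ℕ => ((p.1 : ℝ), (p.2 : ℝ)) ∈
                  convexHull ℝ (insert ((0 : ℝ), (0 : ℝ))
                    (Set.range fun i : Fin (S + 1) => ((a i : ℝ), (b i : ℝ))))),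
              ‖ξ‖ ^ p.1 * ‖lam‖ ^ p.2)
          ≤ C₂ * ∏ i : Fin S, (‖ξ‖ + ‖lam‖ ^ (1 / r i)) ^ (a i.succ - a i.castSucc) := by
  set box := Finset.Iic (a (Fin.last S)) ×ˢ Finset.Iic (b 0)
  have hbox : (0 : ℝ) < #box := Nat.cast_pos.mpr (card_pos.mpr ⟨(0, 0), by simp [box]⟩)
  refine ⟨(2 ^ ∑ s : Fin S, (a s.succ - a s.castSucc))⁻¹, by positivity, #box, hbox, ?_⟩
  intro ξ lam hlam
  have hx : 0 ≤ ‖ξ‖ := norm_nonneg ξ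
  have hr0 : ∀ s, r s ≠ 0 := fun s => (hrpos s).ne'
  constructor
  · obtain ⟨m, hm⟩ := exists_prod_le_two_pow_mul_vertex hamono.monotone ha0 hbS hrdef hrpos
      hranti.antitone hx hlam
    rw [inv_mul_le_iff₀ (by positivity)]
    refine hm.trans (mul_le_mul_of_nonneg_left (single_le_sum (a := (a m, b m))
      (f := fun p : ℕ × ℕ => ‖ξ‖ ^ p.1 * ‖lam‖ ^ p.2) (fun _ _ => by positivity) ?_)
      (by positivity))
    exact mem_filter.mpr ⟨mem_product.mpr ⟨mem_Iic.mpr (hamono.monotone (Fin.le_last m)),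
      mem_Iic.mpr (hbanti.antitone (Fin.zero_le m))⟩,
      subset_convexHull ℝ _ (Set.mem_insert_of_mem _ ⟨m, rfl⟩)⟩
  · refine (sum_le_card_nsmul _ _ (∏ s, (‖ξ‖ + ‖lam‖ ^ (1 / r s)) ^ (a s.succ - a s.castSucc))
      fun p hp => ?_).trans ?_
    · obtain ⟨hpbox, hphull⟩ := mem_filter.mp hp
      exact pow_mul_pow_le_prod_of_mem_convexHull hamono.monotone ha0 hbS hrdef hr0 hx hlam
        (mem_Iic.mp (mem_product.mp hpbox).2) hphull
    · rw [nsmul_eq_mul]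
      gcongr
      exact filter_subset _ _

/-- equivalence between the lattice-point sum `Σ_{(i,k)∈N∩ℤ²} |ξ|^i |λ|^k`
over the Newton polygon `N` with vertices `(0,0), (a₁,b₁), …, (a_{S+1},b_{S+1})` and the
product `∏_{s=1}^S (|ξ| + |λ|^{1/r_s})^{a_{s+1}-a_s}`, for `|λ| ≥ 1`. -/
theorem statement12 (n S : ℕ) (hS : 0 < S)
    (a b : Fin (S + 1) → ℕ) (ha0 : a 0 = 0) (hbS : b (Fin.last S) = 0)
    (hamono : StrictMono a) (hbanti : StrictAnti b)
    (heven : ∀ i : Fin S, Even (a i.succ - a i.castSucc))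
    (r : Fin S → ℝ)
    (hrdef : ∀ i : Fin S,
      r i * ((b i.castSucc : ℝ) - (b i.succ : ℝ)) = (a i.succ : ℝ) - (a i.castSucc : ℝ))
    (hrpos : ∀ i, 0 < r i) (hranti : StrictAnti r) :
    ∃ C₁ > (0 : ℝ), ∃ C₂ > (0 : ℝ), ∀ ξ : EuclideanSpace ℝ (Fin n), ∀ lam : ℂ,
      1 ≤ ‖lam‖ →
      C₁ * ∏ i : Fin S, (‖ξ‖ + ‖lam‖ ^ (1 / r i)) ^ (a i.succ - a i.castSucc)
          ≤ (∑ p ∈ (Finset.Iic (a (Fin.last S)) ×ˢ Finset.Iic (b 0)).filter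
                (fun p : ℕ × ℕ => ((p.1 : ℝ), (p.2 : ℝ)) ∈
                  convexHull ℝ (insert ((0 : ℝ), (0 : ℝ))
                    (Set.range fun i : Fin (S + 1) => ((a i : ℝ), (b i : ℝ))))),
              ‖ξ‖ ^ p.1 * ‖lam‖ ^ p.2) ∧
      (∑ p ∈ (Finset.Iic (a (Fin.last S)) ×ˢ Finset.Iic (b 0)).filter
                (fun p : ℕ × ℕ => ((p.1 : ℝ), (p.2 : ℝ)) ∈
                  convexHull ℝ (insert ((0 : ℝ), (0 : ℝ))
                    (Set.range fun i : Fin (S + 1) => ((a i : ℝ), (b i : ℝ))))),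
              ‖ξ‖ ^ p.1 * ‖lam‖ ^ p.2)
          ≤ C₂ * ∏ i : Fin S, (‖ξ‖ + ‖lam‖ ^ (1 / r i)) ^ (a i.succ - a i.castSucc) :=
  statement12_general n S a b ha0 hbS hamono hbanti r hrdef hrpos hranti

end
end

section
/- Let A(ξ,λ) = Σ_{j=2μ}^{2m} λ^{2m−j} A_j(ξ) be N-elliptic with parameter in [0,∞). Then for every λ₀ > 0 there exists a constant C = C(λ₀) > 0 such that for all λ ≥ λ₀ and all ξ ∈ ℝⁿ the pointwise inequality (1+|ξ|²)^μ (λ²+|ξ|²)^{m−μ} ≤ C ( |A(ξ,λ)|² (1+|ξ|²)^{−μ} (λ²+|ξ|²)^{−(m−μ)} + λ^{2m−2μ} ) holds. -/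
open MeasureTheory Finset Polynomial

noncomputable section

/-! Write `P = (1 + |ξ|²)^μ (λ² + |ξ|²)^(m-μ)`. For `|ξ| ≤ 1` and `λ ≥ λ₀`, `P` is at most a
constant times `λ^(2m-2μ)`. For `|ξ| ≥ 1`, `1 + |ξ|² ≤ 2|ξ|²` and `λ² + |ξ|² ≤ (λ + |ξ|)²`, so
`N`-ellipticity gives `P ≤ c |A(ξ,λ)|`, i.e. `P ≤ c² |A(ξ,λ)|² / P`. -/

lemma weight_le_of_sq_le_one {x lam lam0 : ℝ} (μ k : ℕ) (hlam0 : 0 < lam0) (hlam : lam0 ≤ lam)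
    (hx : x ^ 2 ≤ 1) :
    (1 + x ^ 2) ^ μ * (lam ^ 2 + x ^ 2) ^ k ≤ 2 ^ μ * (1 + 1 / lam0 ^ 2) ^ k * lam ^ (2 * k) := by
  have hsq : lam0 ^ 2 ≤ lam ^ 2 := pow_le_pow_left₀ hlam0.le hlam 2
  have hone : 1 + x ^ 2 ≤ 2 := by linarith
  have hlam_sq : lam ^ 2 + x ^ 2 ≤ (1 + 1 / lam0 ^ 2) * lam ^ 2 := by
    have : 1 ≤ lam ^ 2 / lam0 ^ 2 := by rw [le_div_iff₀ (by positivity)]; linarith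
    rw [add_mul, one_mul, one_div_mul_eq_div]
    linarith
  calc (1 + x ^ 2) ^ μ * (lam ^ 2 + x ^ 2) ^ k
      ≤ 2 ^ μ * ((1 + 1 / lam0 ^ 2) * lam ^ 2) ^ k := by gcongr
    _ = 2 ^ μ * (1 + 1 / lam0 ^ 2) ^ k * lam ^ (2 * k) := by rw [mul_pow, pow_mul']; ring

lemma weight_le_of_one_le {x lam a C0 : ℝ} (μ k : ℕ) (hC0 : 0 < C0) (hlam : 0 ≤ lam)
    (hx : 1 ≤ x) (ha : C0 * x ^ (2 * μ) * (lam + x) ^ (2 * k) ≤ a) :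
    (1 + x ^ 2) ^ μ * (lam ^ 2 + x ^ 2) ^ k ≤ 2 ^ μ / C0 * a := by
  have hone : 1 + x ^ 2 ≤ 2 * x ^ 2 := by nlinarith
  have hlam_sq : lam ^ 2 + x ^ 2 ≤ (lam + x) ^ 2 := by nlinarith
  calc (1 + x ^ 2) ^ μ * (lam ^ 2 + x ^ 2) ^ k
      ≤ (2 * x ^ 2) ^ μ * ((lam + x) ^ 2) ^ k := by gcongr
    _ = 2 ^ μ / C0 * (C0 * x ^ (2 * μ) * (lam + x) ^ (2 * k)) := by
        rw [mul_pow, ← pow_mul, ← pow_mul, mul_comm 2 k]; field_simp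
    _ ≤ 2 ^ μ / C0 * a := by gcongr

lemma le_sq_div_self_of_le {P b : ℝ} (hP : 0 < P) (h : P ≤ b) : P ≤ b ^ 2 / P := by
  rw [le_div_iff₀ hP, ← sq]
  exact pow_le_pow_left₀ hP.le h 2

lemma le_max_mul_add_of_le_or_le {P a b u v : ℝ} (ha : 0 ≤ a) (hu : 0 ≤ u)
    (hv : 0 ≤ v) (h : P ≤ a * u ∨ P ≤ b * v) : P ≤ max a b * (u + v) := by
  have hab : 0 ≤ max a b := ha.trans (le_max_left a b)
  rcases h with h | h
  · nlinarith [mul_le_mul_of_nonneg_right (le_max_left a b) hu, mul_nonneg hab hv]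
  · nlinarith [mul_le_mul_of_nonneg_right (le_max_right a b) hv, mul_nonneg hab hu]

theorem statement16_general (n m μ : ℕ)
    (A : ℕ → EuclideanSpace ℝ (Fin n) → ℂ)
    (hell : NElliptic m μ A) :
    ∀ lam0 : ℝ, 0 < lam0 → ∃ C > (0 : ℝ), ∀ lam : ℝ, lam0 ≤ lam →
      ∀ ξ : EuclideanSpace ℝ (Fin n),
        (1 + ‖ξ‖ ^ 2) ^ μ * (lam ^ 2 + ‖ξ‖ ^ 2) ^ (m - μ)
          ≤ C * (‖pencil m μ A ξ lam‖ ^ 2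
                / ((1 + ‖ξ‖ ^ 2) ^ μ * (lam ^ 2 + ‖ξ‖ ^ 2) ^ (m - μ))
              + lam ^ (2 * m - 2 * μ)) := by
  intro lam0 hlam0
  obtain ⟨C0, hC0, hC⟩ := hell
  refine ⟨max ((2 ^ μ / C0) ^ 2) (2 ^ μ * (1 + 1 / lam0 ^ 2) ^ (m - μ)),
    lt_max_of_lt_left (by positivity), fun lam hlam ξ => ?_⟩
  have hlam_pos : 0 < lam := hlam0.trans_le hlam
  have hP : 0 < (1 + ‖ξ‖ ^ 2) ^ μ * (lam ^ 2 + ‖ξ‖ ^ 2) ^ (m - μ) := by positivity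
  rw [← Nat.mul_sub]
  refine le_max_mul_add_of_le_or_le (by positivity) (by positivity) (by positivity) ?_
  rcases le_total ‖ξ‖ 1 with hξ | hξ
  · exact Or.inr (weight_le_of_sq_le_one μ (m - μ) hlam0 hlam (by nlinarith [norm_nonneg ξ]))
  · left
    have hpencil := hC ξ lam hlam_pos.le
    rw [← Nat.mul_sub] at hpencil
    rw [mul_div_assoc', ← mul_pow]
    exact le_sq_div_self_of_le hP (weight_le_of_one_le μ (m - μ) hC0 hlam_pos.le hξ hpencil)

/-- the pointwise inequality behind the a priori estimate in `ℝⁿ`. -/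
theorem statement16 (n m μ : ℕ) (hn : 1 ≤ n) (hμm : μ < m)
    (A : ℕ → EuclideanSpace ℝ (Fin n) → ℂ)
    (hA : ∀ j ∈ Finset.Icc (2 * μ) (2 * m), IsHomogPoly n j (A j))
    (hell : NElliptic m μ A) :
    ∀ lam0 : ℝ, 0 < lam0 → ∃ C > (0 : ℝ), ∀ lam : ℝ, lam0 ≤ lam →
      ∀ ξ : EuclideanSpace ℝ (Fin n),
        (1 + ‖ξ‖ ^ 2) ^ μ * (lam ^ 2 + ‖ξ‖ ^ 2) ^ (m - μ)
          ≤ C * (‖pencil m μ A ξ lam‖ ^ 2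
                / ((1 + ‖ξ‖ ^ 2) ^ μ * (lam ^ 2 + ‖ξ‖ ^ 2) ^ (m - μ))
              + lam ^ (2 * m - 2 * μ)) :=
  statement16_general n m μ A hell

end
end
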